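/- Let h > 0 and let G : [−2h, 2h] → ℝ be three times continuously differentiable. Then ∫_{−2h}^{2h} R_h(t) G'''(t) dt = −(G'(2h) + 6G'(0) + G'(−2h))/(2h) + (G(2h) − G(−2h))/h². -/

import Mathlib

open MeasureTheory intervalIntegral

/-- The piecewise quadratic function `R_h`. -/
noncomputable def bumpR (h t : ℝ) : ℝ :=
  if |t| ≤ 2 * h then 1 - 3 * |t| / (2 * h) + t ^ 2 / (2 * h ^ 2) else 0

/-!
On `[-2h, 0]` and on `[0, 2h]` the function `R_h` is a quadratic with second derivative `1/h²`,
so integrating by parts three times on each half leaves only boundary terms. The `G''` terms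
cancel since `R_h` is continuous and vanishes at `±2h`; the slopes `∓1/(2h)` of `R_h` at `±2h`
give the `G'(±2h)` terms, its kink at `0` (slope `3/(2h)` to `-3/(2h)`) gives `6 G'(0)/(2h)`,
and `R_h'' = 1/h²` gives `(G(2h) - G(-2h))/h²`.
-/

open Set Interval

theorem integral_mul_third_deriv_eq {a b k : ℝ} {u u' G G' G'' G''' : ℝ → ℝ}
    (hu : ∀ t, HasDerivAt u (u' t) t) (hu' : ∀ t, HasDerivAt u' k t)
    (hG : ∀ t ∈ [[a, b]], HasDerivWithinAt G (G' t) [[a, b]] t)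
    (hG' : ∀ t ∈ [[a, b]], HasDerivWithinAt G' (G'' t) [[a, b]] t)
    (hG'' : ∀ t ∈ [[a, b]], HasDerivWithinAt G'' (G''' t) [[a, b]] t)
    (hG''' : ContinuousOn G''' [[a, b]]) :
    ∫ t in a..b, u t * G''' t
      = u b * G'' b - u a * G'' a - (u' b * G' b - u' a * G' a) + k * (G b - G a) := by
  have integrable {F F' : ℝ → ℝ} (hF : ∀ t ∈ [[a, b]], HasDerivWithinAt F (F' t) [[a, b]] t) :
      IntervalIntegrable F volume a b :=
    ContinuousOn.intervalIntegrable fun t ht => (hF t ht).continuousWithinAt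
  have hu'_cont : Continuous u' := continuous_iff_continuousAt.2 fun t => (hu' t).continuousAt
  rw [integral_mul_deriv_eq_deriv_mul_of_hasDerivWithinAt (fun t _ => (hu t).hasDerivWithinAt)
      hG'' (hu'_cont.intervalIntegrable a b) hG'''.intervalIntegrable,
    integral_mul_deriv_eq_deriv_mul_of_hasDerivWithinAt (fun t _ => (hu' t).hasDerivWithinAt)
      hG' intervalIntegrable_const (integrable hG''),
    integral_mul_deriv_eq_deriv_mul_of_hasDerivWithinAt (u := fun _ => k)
      (fun t _ => hasDerivWithinAt_const t _ k) hG intervalIntegrable_const (integrable hG')]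
  simp only [zero_mul, intervalIntegral.integral_zero, sub_zero]
  ring

theorem integral_quadratic_mul_third_deriv_eq (α β γ : ℝ) {a b : ℝ} {G G' G'' G''' : ℝ → ℝ}
    (hG : ∀ t ∈ [[a, b]], HasDerivWithinAt G (G' t) [[a, b]] t)
    (hG' : ∀ t ∈ [[a, b]], HasDerivWithinAt G' (G'' t) [[a, b]] t)
    (hG'' : ∀ t ∈ [[a, b]], HasDerivWithinAt G'' (G''' t) [[a, b]] t)
    (hG''' : ContinuousOn G''' [[a, b]]) :
    ∫ t in a..b, (α + β * t + γ * t ^ 2) * G''' t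
      = (α + β * b + γ * b ^ 2) * G'' b - (α + β * a + γ * a ^ 2) * G'' a
        - ((β + 2 * γ * b) * G' b - (β + 2 * γ * a) * G' a) + 2 * γ * (G b - G a) := by
  refine integral_mul_third_deriv_eq (u' := fun t => β + 2 * γ * t) (k := 2 * γ)
    (fun t => ?_) (fun t => ?_) hG hG' hG'' hG'''
  · refine ((((hasDerivAt_id' t).const_mul β).const_add α).add
      ((hasDerivAt_pow 2 t).const_mul γ)).congr_deriv ?_
    ring
  · simpa using (((hasDerivAt_id' t).const_mul (2 * γ)).const_add β)

theorem bumpR_neg (h t : ℝ) : bumpR h (-t) = bumpR h t := by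
  simp only [bumpR, abs_neg, neg_sq]

theorem bumpR_of_mem_Icc {h t : ℝ} (ht : t ∈ Icc 0 (2 * h)) :
    bumpR h t = 1 - 3 * t / (2 * h) + t ^ 2 / (2 * h ^ 2) := by
  rw [bumpR, abs_of_nonneg ht.1, if_pos ht.2]

theorem continuous_bumpR {h : ℝ} (hh : h ≠ 0) : Continuous (bumpR h) := by
  refine Continuous.if_le (by fun_prop) continuous_const continuous_abs continuous_const ?_
  intro t ht
  rw [← sq_abs, ht]
  field_simp
  ring

/-- Integration-by-parts identity for `R_h` against `G'''`:
`∫_{−2h}^{2h} R_h(t) G'''(t) dt = −(G'(2h) + 6G'(0) + G'(−2h))/(2h) + (G(2h) − G(−2h))/h²`. -/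
theorem bumpR_int_by_parts (h : ℝ) (hh : 0 < h) (G G' G'' G''' : ℝ → ℝ)
    (hG' : ∀ t ∈ Set.Icc (-(2 * h)) (2 * h), HasDerivWithinAt G (G' t) (Set.Icc (-(2 * h)) (2 * h)) t)
    (hG'' : ∀ t ∈ Set.Icc (-(2 * h)) (2 * h), HasDerivWithinAt G' (G'' t) (Set.Icc (-(2 * h)) (2 * h)) t)
    (hG''' : ∀ t ∈ Set.Icc (-(2 * h)) (2 * h), HasDerivWithinAt G'' (G''' t) (Set.Icc (-(2 * h)) (2 * h)) t)
    (hcont : ContinuousOn G''' (Set.Icc (-(2 * h)) (2 * h))) :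
    ∫ t in (-(2 * h))..(2 * h), bumpR h t * G''' t
      = -((G' (2 * h) + 6 * G' 0 + G' (-(2 * h))) / (2 * h)) + (G (2 * h) - G (-(2 * h))) / h ^ 2 := by
  set I := Icc (-(2 * h)) (2 * h)
  have hl : -(2 * h) ∈ I := ⟨le_rfl, by linarith⟩
  have h0 : (0 : ℝ) ∈ I := ⟨by linarith, by linarith⟩
  have hr : 2 * h ∈ I := ⟨by linarith, le_rfl⟩
  have integrable {a b : ℝ} (ha : a ∈ I) (hb : b ∈ I) :
      IntervalIntegrable (fun t => bumpR h t * G''' t) volume a b :=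
    ((continuous_bumpR hh.ne').continuousOn.mul
      (hcont.mono (uIcc_subset_Icc ha hb))).intervalIntegrable
  have restrict {F F' : ℝ → ℝ} (hF : ∀ t ∈ I, HasDerivWithinAt F (F' t) I t) {a b : ℝ}
      (ha : a ∈ I) (hb : b ∈ I) : ∀ t ∈ [[a, b]], HasDerivWithinAt F (F' t) [[a, b]] t :=
    fun t ht => (hF t (uIcc_subset_Icc ha hb ht)).mono (uIcc_subset_Icc ha hb)
  have piece {a b : ℝ} (ha : a ∈ I) (hb : b ∈ I) (β : ℝ)
      (hR : EqOn (bumpR h) (fun t => 1 + β * t + 1 / (2 * h ^ 2) * t ^ 2) [[a, b]]) :=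
    (integral_congr fun t ht => congrArg (· * G''' t) (hR ht)).trans <|
      integral_quadratic_mul_third_deriv_eq 1 β (1 / (2 * h ^ 2)) (restrict hG' ha hb)
        (restrict hG'' ha hb) (restrict hG''' ha hb) (hcont.mono (uIcc_subset_Icc ha hb))
  rw [← integral_add_adjacent_intervals (integrable hl h0) (integrable h0 hr),
    piece hl h0 (3 / (2 * h)) ?left, piece h0 hr (-(3 / (2 * h))) ?right]
  · field_simp
    ring
  case left =>
    intro t ht
    rw [uIcc_of_le (by linarith)] at ht
    rw [← bumpR_neg, bumpR_of_mem_Icc ⟨by linarith [ht.2], by linarith [ht.1]⟩]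
    ring
  case right =>
    intro t ht
    rw [uIcc_of_le (by linarith)] at ht
    rw [bumpR_of_mem_Icc ht]
    ring
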